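/- Let C^c_{HL,c}(α) = sup over measurable sets E ⊆ ℝⁿ with 0 < |E| < ∞ of (1/|E|)·|{x ∈ ℝⁿ : M^c_{HL,c} χ_E(x) > α}|. Then C^c_{HL,c}(α) − 1 ∼_n 1/α − 1 as α → 1⁻; that is, there exist constants 0 < c ≤ C depending only on n and a threshold α₀ ∈ (0,1) such that for all α ∈ (α₀, 1), c·(1/α − 1) ≤ C^c_{HL,c}(α) − 1 ≤ C·(1/α − 1). In particular lim_{α→1⁻} C^c_{HL,c}(α) = 1. -/

import Mathlib

/-!
Centred cubes are the balls of the sup metric on `Fin n → ℝ`. If `M χ_E(x) > α` with `x ∉ E`,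
some cube `Q` centred at `x` has `|E ∩ Q| > α |Q|`, hence `|Q \ E| ≤ (1/α - 1) |E ∩ Q|`. The
Besicovitch covering theorem picks from these cubes `N = N(n)` families of pairwise disjoint ones
covering all such `x`, so `|{M χ_E > α}| ≤ (1 + N (1/α - 1)) |E|`.

Conversely, remove from `(-1,1)ⁿ` the slab `|x_i| ≤ h` with `h = (1 - α)/4`. Every point of the
slab within `(-1/2,1/2)ⁿ` sees the remaining set with density at least `1 - 2h > α` in the unit
cube around it, which adds `2h` to the superlevel set of a set of measure at most `2ⁿ`.
-/

open MeasureTheory Set Filter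
open scoped ENNReal

/-- The open axis-parallel cube of side length `2r` centered at `x`. -/
def centeredCube {n : ℕ} (x : Fin n → ℝ) (r : ℝ) : Set (Fin n → ℝ) :=
  Set.univ.pi fun i => Set.Ioo (x i - r) (x i + r)

/-- The centered Hardy–Littlewood maximal operator with respect to
axis-parallel cubes on `ℝⁿ`. -/
noncomputable def MHLcc (n : ℕ) (f : (Fin n → ℝ) → ℝ≥0∞) (x : Fin n → ℝ) : ℝ≥0∞ :=
  ⨆ (r : ℝ) (_ : 0 < r),
    (∫⁻ y in centeredCube x r, f y) / volume (centeredCube x r)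

/-- The sharp Tauberian constant `C^c_{HL,c}(α)` of the centered
Hardy–Littlewood maximal operator with respect to cubes. -/
noncomputable def CHLcc (n : ℕ) (α : ℝ) : ℝ≥0∞ :=
  ⨆ (E : Set (Fin n → ℝ)) (_ : MeasurableSet E) (_ : 0 < volume E)
    (_ : volume E < ⊤),
    volume {x : Fin n → ℝ | MHLcc n (E.indicator 1) x > ENNReal.ofReal α}
      / volume E


open Metric Topology

lemma centeredCube_eq_ball {n : ℕ} (x : Fin n → ℝ) {r : ℝ} (hr : 0 < r) :
    centeredCube x r = ball x r := by
  rw [ball_pi _ hr, centeredCube]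
  exact pi_congr rfl fun i _ => (Real.ball_eq_Ioo _ _).symm

lemma MHLcc_indicator_eq {n : ℕ} {E : Set (Fin n → ℝ)} (hE : MeasurableSet E)
    (x : Fin n → ℝ) :
    MHLcc n (E.indicator 1) x =
      ⨆ (r : ℝ) (_ : 0 < r), volume (E ∩ ball x r) / volume (ball x r) := by
  refine iSup_congr fun r => iSup_congr fun hr => ?_
  rw [centeredCube_eq_ball x hr, lintegral_indicator_one hE, Measure.restrict_apply hE]

lemma lt_MHLcc_indicator_iff {n : ℕ} {E : Set (Fin n → ℝ)} (hE : MeasurableSet E)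
    {x : Fin n → ℝ} {t : ℝ≥0∞} :
    t < MHLcc n (E.indicator 1) x ↔ ∃ r > 0, t * volume (ball x r) < volume (E ∩ ball x r) := by
  simp only [MHLcc_indicator_eq hE, lt_iSup_iff, exists_prop]
  exact exists_congr fun r => and_congr_right fun hr => ENNReal.lt_div_iff_mul_lt
    (.inl (measure_ball_pos volume x hr).ne') (.inl measure_ball_lt_top.ne)

lemma measure_diff_le_of_density_le {X : Type*} [MeasurableSpace X] (μ : Measure X)
    {E B : Set X} (hE : MeasurableSet E) (hB : μ B ≠ ⊤)
    {α : ℝ} (hα₀ : 0 < α) (hα₁ : α ≤ 1) (h : ENNReal.ofReal α * μ B ≤ μ (E ∩ B)) :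
    μ (B \ E) ≤ ENNReal.ofReal (1 / α - 1) * μ (E ∩ B) := by
  have hsplit : μ (B \ E) + μ (E ∩ B) = μ B := by
    rw [inter_comm]; exact measure_sdiff_add_inter B hE
  have hscale : ENNReal.ofReal (1 / α - 1) * ENNReal.ofReal α = 1 - ENNReal.ofReal α := by
    rw [← ENNReal.ofReal_mul (by rw [sub_nonneg, le_div_iff₀ hα₀]; linarith),
      ← ENNReal.ofReal_one, ← ENNReal.ofReal_sub _ hα₀.le]
    congr 1; field_simp
  calc μ (B \ E) = μ B - μ (E ∩ B) :=
        ENNReal.eq_sub_of_add_eq (measure_ne_top_of_subset inter_subset_right hB) hsplit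
    _ ≤ μ B - ENNReal.ofReal α * μ B := tsub_le_tsub_left h _
    _ = (1 - ENNReal.ofReal α) * μ B := by rw [ENNReal.sub_mul fun _ _ => hB, one_mul]
    _ = ENNReal.ofReal (1 / α - 1) * (ENNReal.ofReal α * μ B) := by rw [← mul_assoc, hscale]
    _ ≤ ENNReal.ofReal (1 / α - 1) * μ (E ∩ B) := by gcongr

section BesicovitchDensity

variable {β : Type*} [MetricSpace β] [MeasurableSpace β] [OpensMeasurableSpace β]
  [TopologicalSpace.SeparableSpace β] (μ : Measure β)

lemma measure_biUnion_ball_diff_le {ι : Type*} {s : Set ι} {c : ι → β} {r : ι → ℝ}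
    (hr : ∀ j ∈ s, 0 < r j) (hs : s.PairwiseDisjoint fun j => closedBall (c j) (r j))
    {E : Set β} (hE : MeasurableSet E) {k : ℝ≥0∞}
    (hk : ∀ j ∈ s, μ (ball (c j) (r j) \ E) ≤ k * μ (E ∩ ball (c j) (r j))) :
    μ (⋃ j ∈ s, ball (c j) (r j) \ E) ≤ k * μ E := by
  have hcount : s.Countable := hs.countable_of_nonempty_interior fun j hj =>
    (nonempty_ball.2 (hr j hj)).mono ball_subset_interior_closedBall
  have hdisj : s.PairwiseDisjoint fun j => E ∩ ball (c j) (r j) :=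
    hs.mono fun _ => inter_subset_right.trans ball_subset_closedBall
  calc μ (⋃ j ∈ s, ball (c j) (r j) \ E)
      ≤ ∑' j : s, μ (ball (c j) (r j) \ E) := measure_biUnion_le μ hcount _
    _ ≤ ∑' j : s, k * μ (E ∩ ball (c j) (r j)) := ENNReal.tsum_le_tsum fun j => hk j j.2
    _ = k * μ (⋃ j ∈ s, E ∩ ball (c j) (r j)) := by
      rw [ENNReal.tsum_mul_left, measure_biUnion hcount hdisj fun j _ =>
        hE.inter measurableSet_ball]
    _ ≤ k * μ E := by gcongr; exact iUnion₂_subset fun _ _ => inter_subset_left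

lemma measure_diff_le_of_forall_density_lt {N : ℕ} {τ : ℝ} (hτ : 1 < τ)
    (hN : IsEmpty (Besicovitch.SatelliteConfig β N τ)) {E A : Set β} (hE : MeasurableSet E)
    {r : β → ℝ} {R : ℝ} (hr : ∀ a ∈ A, r a ∈ Ioc 0 R) (hfin : ∀ a ∈ A, μ (ball a (r a)) ≠ ⊤)
    {α : ℝ} (hα₀ : 0 < α) (hα₁ : α ≤ 1)
    (hdens : ∀ a ∈ A, ENNReal.ofReal α * μ (ball a (r a)) < μ (E ∩ ball a (r a))) :
    μ (A \ E) ≤ N * (ENNReal.ofReal (1 / α - 1) * μ E) := by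
  let q : Besicovitch.BallPackage A β :=
    { c := (↑), r := fun a => r a, rpos := fun a => (hr a a.2).1, r_bound := R,
      r_le := fun a => (hr a a.2).2 }
  obtain ⟨s, hsd, hcov⟩ := Besicovitch.exist_disjoint_covering_families hτ hN q
  have hA : A \ E ⊆ ⋃ i, ⋃ j ∈ s i, ball (q.c j) (q.r j) \ E := by
    rintro a ⟨ha, haE⟩
    have := hcov ⟨⟨a, ha⟩, rfl⟩
    simp only [mem_iUnion] at this ⊢
    obtain ⟨i, j, hj, haj⟩ := this
    exact ⟨i, j, hj, haj, haE⟩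
  calc μ (A \ E) ≤ ∑ i, μ (⋃ j ∈ s i, ball (q.c j) (q.r j) \ E) :=
        (measure_mono hA).trans (measure_iUnion_fintype_le μ _)
    _ ≤ ∑ _i : Fin N, ENNReal.ofReal (1 / α - 1) * μ E :=
        Finset.sum_le_sum fun i _ => measure_biUnion_ball_diff_le μ (fun j _ => q.rpos j)
          (hsd i) hE fun j _ => measure_diff_le_of_density_le μ hE (hfin j j.2) hα₀ hα₁
            (hdens j j.2).le
    _ = N * (ENNReal.ofReal (1 / α - 1) * μ E) := by simp

end BesicovitchDensity

lemma le_max_one_of_volume_ball_le {n : ℕ} (hn : 1 ≤ n) {x : Fin n → ℝ} {r : ℝ} (hr : 0 < r)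
    {V : ℝ≥0∞} (hV : V ≠ ⊤) (h : volume (ball x r) ≤ V) : r ≤ max 1 V.toReal := by
  rw [Real.volume_pi_ball x hr, Fintype.card_fin, ENNReal.ofReal_le_iff_le_toReal hV] at h
  rcases le_or_gt r 1 with h1 | h1
  · exact le_max_of_le_left h1
  · refine le_max_of_le_right ?_
    calc r ≤ r ^ n := le_self_pow₀ h1.le (by omega)
      _ ≤ (2 * r) ^ n := by gcongr; linarith
      _ ≤ V.toReal := h

lemma volume_setOf_lt_MHLcc_indicator_le {n : ℕ} (hn : 1 ≤ n) {N : ℕ} {τ : ℝ} (hτ : 1 < τ)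
    (hN : IsEmpty (Besicovitch.SatelliteConfig (Fin n → ℝ) N τ)) {E : Set (Fin n → ℝ)}
    (hE : MeasurableSet E) (hEtop : volume E ≠ ⊤) {α : ℝ} (hα₀ : 0 < α) (hα₁ : α ≤ 1) :
    volume {x | ENNReal.ofReal α < MHLcc n (E.indicator 1) x}
      ≤ (1 + N * ENNReal.ofReal (1 / α - 1)) * volume E := by
  set A := {x | ENNReal.ofReal α < MHLcc n (E.indicator 1) x}
  have hα : ENNReal.ofReal α ≠ 0 := by simpa using hα₀
  have hbound : volume E / ENNReal.ofReal α ≠ ⊤ := ENNReal.div_ne_top hEtop hα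
  have hrad : ∀ a ∈ A, ∃ r, r ∈ Ioc 0 (max 1 (volume E / ENNReal.ofReal α).toReal) ∧
      ENNReal.ofReal α * volume (ball a r) < volume (E ∩ ball a r) := by
    intro a ha
    obtain ⟨r, hr, hdens⟩ := (lt_MHLcc_indicator_iff hE).1 ha
    refine ⟨r, ⟨hr, le_max_one_of_volume_ball_le hn (x := a) hr hbound ?_⟩, hdens⟩
    rw [ENNReal.le_div_iff_mul_le (.inl hα) (.inl ENNReal.ofReal_ne_top), mul_comm]
    exact hdens.le.trans (measure_mono inter_subset_left)
  choose! r hr hdens using hrad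
  calc volume A ≤ volume (A ∩ E) + volume (A \ E) := measure_le_inter_add_sdiff _ _ _
    _ ≤ volume E + N * (ENNReal.ofReal (1 / α - 1) * volume E) :=
      add_le_add (measure_mono inter_subset_right)
        (measure_diff_le_of_forall_density_lt volume hτ hN hE hr
          (fun _ _ => measure_ball_lt_top.ne) hα₀ hα₁ hdens)
    _ = (1 + N * ENNReal.ofReal (1 / α - 1)) * volume E := by ring

lemma CHLcc_le_one_add {n : ℕ} (hn : 1 ≤ n) {N : ℕ} {τ : ℝ} (hτ : 1 < τ)
    (hN : IsEmpty (Besicovitch.SatelliteConfig (Fin n → ℝ) N τ)) {α : ℝ} (hα₀ : 0 < α)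
    (hα₁ : α ≤ 1) : CHLcc n α ≤ 1 + ENNReal.ofReal (N * (1 / α - 1)) := by
  rw [ENNReal.ofReal_mul N.cast_nonneg, ENNReal.ofReal_natCast]
  refine iSup₂_le fun E hE => iSup₂_le fun hE0 hEtop => ?_
  rw [ENNReal.div_le_iff hE0.ne' hEtop.ne]
  exact volume_setOf_lt_MHLcc_indicator_le hn hτ hN hE hEtop.ne hα₀ hα₁

lemma lt_MHLcc_indicator_of_isOpen {n : ℕ} {E : Set (Fin n → ℝ)} (hEo : IsOpen E)
    {x : Fin n → ℝ} (hx : x ∈ E) {t : ℝ≥0∞} (ht : t < 1) : t < MHLcc n (E.indicator 1) x := by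
  obtain ⟨ε, hε, hball⟩ := Metric.isOpen_iff.1 hEo x hx
  refine (lt_MHLcc_indicator_iff hEo.measurableSet).2 ⟨ε, hε, ?_⟩
  rw [inter_eq_right.2 hball]
  simpa [mul_comm] using ENNReal.mul_lt_mul_right (measure_ball_pos volume x hε).ne'
    measure_ball_lt_top.ne ht

lemma one_add_div_le_CHLcc {n : ℕ} {α : ℝ} {E G : Set (Fin n → ℝ)} (hE : MeasurableSet E)
    (hE₀ : 0 < volume E) (hEtop : volume E < ⊤) (hG : MeasurableSet G) (hEG : Disjoint E G)
    (hsub : E ∪ G ⊆ {x | ENNReal.ofReal α < MHLcc n (E.indicator 1) x}) :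
    1 + volume G / volume E ≤ CHLcc n α :=
  calc 1 + volume G / volume E = volume (E ∪ G) / volume E := by
        rw [measure_union hEG hG, ENNReal.add_div, ENNReal.div_self hE₀.ne' hEtop.ne]
    _ ≤ volume {x | ENNReal.ofReal α < MHLcc n (E.indicator 1) x} / volume E :=
        ENNReal.div_le_div_right (measure_mono hsub) _
    _ ≤ CHLcc n α := le_iSup₂_of_le E hE (le_iSup₂_of_le hE₀ hEtop le_rfl)

lemma volume_pi_update_of_forall_volume_eq_one {ι : Type*} [Fintype ι] [DecidableEq ι]
    {s : ι → Set ℝ} {i : ι} (hs : ∀ j ≠ i, volume (s j) = 1) (t : Set ℝ) :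
    volume (univ.pi (Function.update s i t)) = volume t := by
  rw [volume_pi_pi]
  simp_rw [Function.apply_update (fun _ => (volume : Measure ℝ))]
  rw [Finset.prod_update_of_mem (Finset.mem_univ i),
    Finset.prod_eq_one fun j hj => hs j (by simpa using hj), mul_one]

def cubeMinusSlab {n : ℕ} (i : Fin n) (h : ℝ) : Set (Fin n → ℝ) :=
  univ.pi (fun _ => Ioo (-1) 1) ∩ {x | h < |x i|}

def innerSlab {n : ℕ} (i : Fin n) (h : ℝ) : Set (Fin n → ℝ) :=
  univ.pi (Function.update (fun _ => Ioo (-2⁻¹) 2⁻¹) i (Ioo (-h) h))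

section Slab

variable {n : ℕ} (i : Fin n) {h : ℝ}

lemma isOpen_cubeMinusSlab : IsOpen (cubeMinusSlab i h) :=
  (isOpen_set_pi finite_univ fun _ _ => isOpen_Ioo).inter
    (isOpen_lt continuous_const (continuous_apply i).abs)

lemma volume_cubeMinusSlab_pos (hh₀ : 0 < h) (hh₁ : h < 1) : 0 < volume (cubeMinusSlab i h) := by
  refine (isOpen_cubeMinusSlab i).measure_pos volume ⟨fun _ => (h + 1) / 2, ?_, ?_⟩
  · exact fun _ _ => ⟨by linarith, by linarith⟩
  · show h < |(h + 1) / 2|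
    rw [abs_of_pos (by linarith)]; linarith

lemma volume_cubeMinusSlab_le : volume (cubeMinusSlab i h) ≤ 2 ^ n := by
  refine (measure_mono inter_subset_left).trans_eq ?_
  simp [volume_pi_pi, Real.volume_Ioo, one_add_one_eq_two]

lemma volume_innerSlab : volume (innerSlab i h) = ENNReal.ofReal (2 * h) := by
  rw [innerSlab, volume_pi_update_of_forall_volume_eq_one (fun _ _ => by norm_num) _,
    Real.volume_Ioo]
  ring_nf

lemma disjoint_cubeMinusSlab_innerSlab : Disjoint (cubeMinusSlab i h) (innerSlab i h) := by
  refine disjoint_left.2 fun x hxE hxG => ?_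
  have := hxG i trivial
  rw [Function.update_self] at this
  exact hxE.2.not_gt (abs_lt.2 this)

lemma measurableSet_innerSlab : MeasurableSet (innerSlab i h) :=
  MeasurableSet.univ_pi fun j => by
    rw [Function.update_apply]; split_ifs <;> exact measurableSet_Ioo

lemma ball_half_diff_cubeMinusSlab_subset (hh : h ≤ 2⁻¹) {x : Fin n → ℝ}
    (hx : x ∈ innerSlab i h) :
    ball x 2⁻¹ \ cubeMinusSlab i h ⊆
      univ.pi (Function.update (fun j => Ioo (x j - 2⁻¹) (x j + 2⁻¹)) i (Icc (-h) h)) := by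
  rintro y ⟨hy, hyE⟩ j -
  rw [← centeredCube_eq_ball x (by norm_num)] at hy
  have hxj : ∀ j, x j ∈ Ioo (-2⁻¹) 2⁻¹ := fun j => by
    have := hx j trivial
    rcases eq_or_ne j i with rfl | hj
    · rw [Function.update_self] at this; exact ⟨by linarith [this.1], by linarith [this.2]⟩
    · rwa [Function.update_of_ne hj] at this
  have hyi : |y i| ≤ h := by
    by_contra! hlt
    exact hyE ⟨fun j _ => ⟨by linarith [(hy j trivial).1, (hxj j).1],
      by linarith [(hy j trivial).2, (hxj j).2]⟩, hlt⟩
  rcases eq_or_ne j i with rfl | hj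
  · rw [Function.update_self]; exact abs_le.1 hyi
  · rw [Function.update_of_ne hj]; exact hy j trivial

lemma lt_MHLcc_indicator_of_mem_innerSlab (hh : h ≤ 2⁻¹) {x : Fin n → ℝ}
    (hx : x ∈ innerSlab i h) {α : ℝ} (hα₀ : 0 ≤ α) (hα : α < 1 - 2 * h) :
    ENNReal.ofReal α < MHLcc n ((cubeMinusSlab i h).indicator 1) x := by
  set E := cubeMinusSlab i h
  have hE : MeasurableSet E := (isOpen_cubeMinusSlab i).measurableSet
  have hh₀ : 0 < h := by
    have := hx i trivial
    rw [Function.update_self] at this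
    linarith [this.1, this.2]
  have hball : volume (ball x 2⁻¹) = 1 := by
    rw [Real.volume_pi_ball x (by norm_num)]; norm_num
  have hdiff : volume (ball x 2⁻¹ \ E) ≤ ENNReal.ofReal (2 * h) := by
    refine (measure_mono (ball_half_diff_cubeMinusSlab_subset i hh hx)).trans_eq ?_
    rw [volume_pi_update_of_forall_volume_eq_one (fun j _ => by norm_num [Real.volume_Ioo]),
      Real.volume_Icc]
    ring_nf
  refine (lt_MHLcc_indicator_iff hE).2 ⟨2⁻¹, by norm_num, ?_⟩
  rw [hball, mul_one]
  refine (ENNReal.add_lt_add_iff_right (ENNReal.ofReal_ne_top (r := 2 * h))).1 ?_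
  calc ENNReal.ofReal α + ENNReal.ofReal (2 * h) < 1 := by
        rw [← ENNReal.ofReal_add hα₀ (by positivity)]
        exact ENNReal.ofReal_lt_one.2 (by linarith)
    _ = volume (E ∩ ball x 2⁻¹) + volume (ball x 2⁻¹ \ E) := by
        rw [← hball, inter_comm]; exact (measure_inter_add_sdiff _ hE).symm
    _ ≤ volume (E ∩ ball x 2⁻¹) + ENNReal.ofReal (2 * h) := by gcongr

end Slab

lemma one_add_le_CHLcc_of_slab {n : ℕ} (i : Fin n) {h : ℝ} (hh₀ : 0 < h) (hh : h ≤ 2⁻¹)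
    {α : ℝ} (hα₀ : 0 ≤ α) (hα : α < 1 - 2 * h) :
    1 + ENNReal.ofReal (2 * h) / 2 ^ n ≤ CHLcc n α := by
  have hE := isOpen_cubeMinusSlab i (h := h)
  have hEle := volume_cubeMinusSlab_le i (h := h)
  refine le_trans ?_ (one_add_div_le_CHLcc hE.measurableSet
    (volume_cubeMinusSlab_pos i hh₀ (by linarith))
    (hEle.trans_lt (by simp)) (measurableSet_innerSlab i)
    (disjoint_cubeMinusSlab_innerSlab i) ?_)
  · rw [volume_innerSlab]
    gcongr
  · rintro x (hx | hx)
    · exact lt_MHLcc_indicator_of_isOpen hE hx (ENNReal.ofReal_lt_one.2 (by linarith))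
    · exact lt_MHLcc_indicator_of_mem_innerSlab i hh hx hα₀ hα

lemma one_add_le_CHLcc {n : ℕ} (i : Fin n) {α : ℝ} (hα : α ∈ Ico (2⁻¹ : ℝ) 1) :
    1 + ENNReal.ofReal (1 / 2 ^ (n + 2) * (1 / α - 1)) ≤ CHLcc n α := by
  obtain ⟨hα_ge, hα_lt⟩ := hα
  refine le_trans ?_ (one_add_le_CHLcc_of_slab i (h := (1 - α) / 4) (by linarith) (by linarith)
    (by linarith) (by linarith))
  rw [← ENNReal.ofReal_ofNat 2, ← ENNReal.ofReal_pow zero_le_two,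
    ← ENNReal.ofReal_div_of_pos (by positivity)]
  gcongr
  have : 1 / α - 1 ≤ 2 * (1 - α) := by
    rw [div_sub_one (by linarith), div_le_iff₀ (by linarith)]; nlinarith
  calc 1 / 2 ^ (n + 2) * (1 / α - 1) ≤ 1 / 2 ^ (n + 2) * (2 * (1 - α)) := by gcongr
    _ = 2 * ((1 - α) / 4) / 2 ^ n := by ring

theorem centered_cube_solyanik_sharp (n : ℕ) (hn : 1 ≤ n) :
    (∃ c C : ℝ, 0 < c ∧ c ≤ C ∧ ∃ α₀ ∈ Set.Ioo (0 : ℝ) 1,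
      ∀ α ∈ Set.Ioo α₀ 1,
        ENNReal.ofReal (c * (1 / α - 1)) ≤ CHLcc n α - 1 ∧
        CHLcc n α - 1 ≤ ENNReal.ofReal (C * (1 / α - 1))) ∧
    Filter.Tendsto (CHLcc n) (nhdsWithin 1 (Set.Iio 1)) (nhds 1) := by
  obtain ⟨N, τ, hτ, hN⟩ := HasBesicovitchCovering.no_satelliteConfig (α := Fin n → ℝ)
  set c : ℝ := 1 / 2 ^ (n + 2)
  have hlower : ∀ α ∈ Ioo (2⁻¹ : ℝ) 1, 1 + ENNReal.ofReal (c * (1 / α - 1)) ≤ CHLcc n α :=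
    fun α hα => one_add_le_CHLcc ⟨0, hn⟩ (Ioo_subset_Ico_self hα)
  have hupper : ∀ α ∈ Ioo (2⁻¹ : ℝ) 1, CHLcc n α ≤ 1 + ENNReal.ofReal (N * (1 / α - 1)) :=
    fun α hα => CHLcc_le_one_add hn hτ hN (by linarith [hα.1]) hα.2.le
  refine ⟨⟨c, max c N, by positivity, le_max_left _ _, 2⁻¹, by norm_num, fun α hα =>
    ⟨ENNReal.le_sub_of_add_le_left ENNReal.one_ne_top (hlower α hα),
      tsub_le_iff_left.2 ((hupper α hα).trans ?_)⟩⟩, ?_⟩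
  · have : 0 ≤ 1 / α - 1 := by rw [sub_nonneg, le_div_iff₀ (by linarith [hα.1])]; linarith [hα.2]
    gcongr
    exact le_max_right _ _
  · have hnear : ∀ᶠ α in 𝓝[<] (1 : ℝ), α ∈ Ioo (2⁻¹ : ℝ) 1 := Ioo_mem_nhdsLT (by norm_num)
    have hcont : ContinuousAt (fun α : ℝ => (N : ℝ) * (1 / α - 1)) 1 := by
      fun_prop (disch := norm_num)
    have hlim : Tendsto (fun α : ℝ => 1 + ENNReal.ofReal (N * (1 / α - 1))) (𝓝 1) (𝓝 1) := by
      simpa using ((ENNReal.continuous_ofReal.continuousAt.comp hcont).tendsto).const_add 1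
    exact tendsto_of_tendsto_of_tendsto_of_le_of_le' tendsto_const_nhds
      (hlim.mono_left nhdsWithin_le_nhds)
      (hnear.mono fun α hα => le_self_add.trans (hlower α hα)) (hnear.mono hupper)
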